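/- A Hausdorff band of topological groups S is metrizable if and only if S is first countable. -/

import Mathlib

open Set TopologicalSpace

/-- The principal left ideal (with `a` adjoined) generated by `a`: `{a} ∪ {s*a : s ∈ S}`. -/
def leftIdeal {S : Type*} [Semigroup S] (a : S) : Set S :=
  insert a {x | ∃ s, x = s * a}

/-- The principal right ideal (with `a` adjoined) generated by `a`: `{a} ∪ {a*s : s ∈ S}`. -/
def rightIdeal {S : Type*} [Semigroup S] (a : S) : Set S :=
  insert a {x | ∃ s, x = a * s}

/-- Green's relation ℋ on a semigroup. -/
def greenH {S : Type*} [Semigroup S] (a b : S) : Prop :=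
  leftIdeal a = leftIdeal b ∧ rightIdeal a = rightIdeal b

/-- The ℋ-class of an element. -/
def HClass {S : Type*} [Semigroup S] (x : S) : Set S := {y | greenH y x}

/-- A semigroup is completely regular if every element is completely regular. -/
def CompletelyRegularSemigroup (S : Type*) [Semigroup S] : Prop :=
  ∀ a : S, ∃ x, a = a * x * a ∧ a * x = x * a

/-- Green's relation ℋ is a congruence. -/
def HIsCongruence (S : Type*) [Semigroup S] : Prop :=
  ∀ a b c : S, greenH a b → greenH (a * c) (b * c) ∧ greenH (c * a) (c * b)

/-- A cryptogroup is a completely regular semigroup in which ℋ is a congruence. -/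
def IsCryptogroup (S : Type*) [Semigroup S] : Prop :=
  CompletelyRegularSemigroup S ∧ HIsCongruence S

/-- In a cryptogroup every ℋ-class is a group; `idp x` (written `x⁰`) is the identity of the
ℋ-class of `x`, and `inv x` (written `x⁻¹`) is the inverse of `x` inside its ℋ-class. -/
structure CryptoOps (S : Type*) [Semigroup S] where
  idp : S → S
  inv : S → S
  idp_mem : ∀ x, greenH (idp x) x
  idp_mul : ∀ x y, greenH y x → idp x * y = y
  mul_idp : ∀ x y, greenH y x → y * idp x = y
  inv_mem : ∀ x, greenH (inv x) x
  mul_inv : ∀ x, x * inv x = idp x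
  inv_mul : ∀ x, inv x * x = idp x

/-- The set `E(S)` of idempotents of a semigroup. -/
def idemSet (S : Type*) [Semigroup S] : Set S := {e | e * e = e}

/-- `(xU)* = {y ∈ S : x⁻¹*y ∈ U and x⁰ = y⁰}`. -/
def lstar {S : Type*} [Semigroup S] (ops : CryptoOps S) (x : S) (U : Set S) : Set S :=
  {y | ops.inv x * y ∈ U ∧ ops.idp x = ops.idp y}

/-- `(Ux)* = {y ∈ S : y*x⁻¹ ∈ U and x⁰ = y⁰}`. -/
def rstar {S : Type*} [Semigroup S] (ops : CryptoOps S) (U : Set S) (x : S) : Set S :=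
  {y | y * ops.inv x ∈ U ∧ ops.idp x = ops.idp y}

/-- `(AB)* = ⋃_{a ∈ A} (aB)*`. -/
def setStar {S : Type*} [Semigroup S] (ops : CryptoOps S) (A B : Set S) : Set S :=
  ⋃ a ∈ A, lstar ops a B

/-- A full subcryptogroup: contains all idempotents, and closed under multiplication
and inversion. -/
def IsFullSubcryptogroup {S : Type*} [Semigroup S] (ops : CryptoOps S) (K : Set S) : Prop :=
  idemSet S ⊆ K ∧ (∀ x ∈ K, ∀ y ∈ K, x * y ∈ K) ∧ (∀ x ∈ K, ops.inv x ∈ K)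

/-
Each ℋ-class of a cryptogroup is a group, and the continuity of multiplication and inversion
make it a topological group. A first countable T₀ topological group is metrizable
(Birkhoff–Kakutani: its one-sided uniformity has a countable basis). Since the ℋ-classes are
open, `S` is homeomorphic to the topological sum of its ℋ-classes, and a sum of metrizable
spaces is metrizable.
-/

theorem IsTopologicalGroup.pseudoMetrizableSpace (G : Type*) [Group G] [TopologicalSpace G]
    [IsTopologicalGroup G] [FirstCountableTopology G] : PseudoMetrizableSpace G :=
  letI := IsTopologicalGroup.rightUniformSpace G
  haveI : (uniformity G).IsCountablyGenerated := Filter.comap.isCountablyGenerated _ _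
  inferInstance

theorem metrizableSpace_of_isOpen_fibers {X ι : Type*} [TopologicalSpace X] (f : X → ι)
    (hopen : ∀ i, IsOpen (f ⁻¹' {i})) (hmetr : ∀ i, MetrizableSpace (f ⁻¹' {i})) :
    MetrizableSpace X := by
  let : ∀ i, MetricSpace (f ⁻¹' {i}) := fun i => metrizableSpaceMetric _
  let : MetricSpace (Σ i, f ⁻¹' {i}) := Metric.Sigma.metricSpace
  let e : (Σ i, f ⁻¹' {i}) ≃ X := Equiv.sigmaFiberEquiv f
  have he : (Σ i, f ⁻¹' {i}) ≃ₜ X := e.toHomeomorphOfContinuousOpen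
    (continuous_sigma fun _ => continuous_subtype_val)
    (isOpenMap_sigma.2 fun i => (hopen i).isOpenMap_subtype_val)
  exact he.symm.isEmbedding.metrizableSpace

theorem Setoid.metrizableSpace_of_isOpen_classes {X : Type*} [TopologicalSpace X] (r : Setoid X)
    (hopen : ∀ x, IsOpen {y | r y x}) (hmetr : ∀ x, MetrizableSpace {y | r y x}) :
    MetrizableSpace X := by
  have hclass (x : X) : Quotient.mk r ⁻¹' {Quotient.mk r x} = {y | r y x} :=
    Set.ext fun _ => Quotient.eq
  refine metrizableSpace_of_isOpen_fibers (Quotient.mk r) (fun c => ?_) (fun c => ?_) <;>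
    obtain ⟨x, rfl⟩ := Quotient.exists_rep c <;> rw [hclass]
  exacts [hopen x, hmetr x]

section Green

variable {S : Type*} [Semigroup S]

theorem greenH_refl (a : S) : greenH a a := ⟨rfl, rfl⟩

theorem greenH_symm {a b : S} (h : greenH a b) : greenH b a := ⟨h.1.symm, h.2.symm⟩

theorem greenH_trans {a b c : S} (h1 : greenH a b) (h2 : greenH b c) : greenH a c :=
  ⟨h1.1.trans h2.1, h1.2.trans h2.2⟩

variable (S) in
def greenHSetoid : Setoid S := ⟨greenH, greenH_refl, greenH_symm, greenH_trans⟩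

end Green

namespace CryptoOps

variable {S : Type*} [Semigroup S]

theorem greenH_mul (ops : CryptoOps S) (hcong : HIsCongruence S) {x y z : S}
    (hy : greenH y x) (hz : greenH z x) : greenH (y * z) x := by
  have hyz : greenH (y * z) (x * z) := (hcong y x z hy).1
  have hxz : greenH (x * z) (x * x) := (hcong z x x hz).2
  have hxx : greenH (x * ops.idp x) (x * x) := (hcong (ops.idp x) x x (ops.idp_mem x)).2
  rw [ops.mul_idp x x (greenH_refl x)] at hxx
  exact greenH_trans hyz (greenH_trans hxz (greenH_symm hxx))

theorem idp_eq_of_greenH (ops : CryptoOps S) {x y : S} (hyx : greenH y x) :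
    ops.idp y = ops.idp x := by
  have h1 : ops.idp x * ops.idp y = ops.idp y :=
    ops.idp_mul x _ (greenH_trans (ops.idp_mem y) hyx)
  have h2 : ops.idp x * ops.idp y = ops.idp x :=
    ops.mul_idp y _ (greenH_trans (ops.idp_mem x) (greenH_symm hyx))
  exact h1.symm.trans h2

abbrev hClassGroup (ops : CryptoOps S) (hcong : HIsCongruence S) (x : S) : Group (HClass x) where
  mul a b := ⟨a * b, ops.greenH_mul hcong a.2 b.2⟩
  one := ⟨ops.idp x, ops.idp_mem x⟩
  inv a := ⟨ops.inv a, greenH_trans (ops.inv_mem a) a.2⟩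
  mul_assoc a b c := Subtype.ext (mul_assoc (a : S) b c)
  one_mul a := Subtype.ext (ops.idp_mul x a a.2)
  mul_one a := Subtype.ext (ops.mul_idp x a a.2)
  inv_mul_cancel a := Subtype.ext <| (ops.inv_mul a).trans (ops.idp_eq_of_greenH a.2)

theorem metrizableSpace_hClass [TopologicalSpace S] [ContinuousMul S] [T0Space S]
    [FirstCountableTopology S] (ops : CryptoOps S) (hcong : HIsCongruence S)
    (hinv : Continuous ops.inv) (x : S) :
    MetrizableSpace (HClass x) :=
  letI := ops.hClassGroup hcong x
  haveI : IsTopologicalGroup (HClass x) :=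
    { continuous_mul := (continuous_subtype_val.fst'.mul continuous_subtype_val.snd').subtype_mk _
      continuous_inv := (hinv.comp continuous_subtype_val).subtype_mk _ }
  haveI := IsTopologicalGroup.pseudoMetrizableSpace (HClass x)
  inferInstance

end CryptoOps

/-- A Hausdorff band of topological groups is metrizable iff it is first countable. -/
theorem stmt16 {S : Type*} [Semigroup S] [TopologicalSpace S] [ContinuousMul S]
    (ops : CryptoOps S) (hcrypt : IsCryptogroup S)
    (hinv : Continuous ops.inv) (hopen : ∀ x : S, IsOpen (HClass x))
    [T2Space S] :
    TopologicalSpace.MetrizableSpace S ↔ FirstCountableTopology S := by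
  refine ⟨fun _ => inferInstance, fun _ => ?_⟩
  exact (greenHSetoid S).metrizableSpace_of_isOpen_classes hopen
    (ops.metrizableSpace_hClass hcrypt.2 hinv)
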